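/- Let Y ~ N(μ, σ²), U Bernoulli(1/2) independent of Y, and X = arctan(Y²) + Uπ. Then the conditional expectation of Y given X equals E(Y|X) = tanh((μ/σ²)√(tan X)) · √(tan X) almost surely. -/

import Mathlib

/-!
Knowing `X` means knowing `U` and `|Y|`; only the sign of `Y` is hidden. As `U` is independent
of `Y`, the sign given `|Y| = r` has the conditional law of a Gaussian sign,
`P(Y = ±r) ∝ exp(±m r / σ²)`, so `E(Y | X) = tanh(m |Y| / σ²) |Y|` with `|Y| = √(tan X)`.
Formally, `∫_{X ∈ A} (tanh(m Y / σ²) Y - Y) = 0` for every Borel `A`: independence turns it into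
an iterated integral against the laws of `U` and `Y`, and for fixed `u` the Gaussian integrand is
odd in `y`.
-/

open MeasureTheory ProbabilityTheory
open scoped NNReal ENNReal

/-- Density of the Gaussian distribution `N(m, s²)`. -/
noncomputable def gpdf (m s y : ℝ) : ℝ :=
  (1 / (s * Real.sqrt (2 * Real.pi))) * Real.exp (-(y - m) ^ 2 / (2 * s ^ 2))

open Real Set

@[fun_prop]
lemma Real.measurable_tan : Measurable tan := by
  rw [show tan = fun x => sin x / cos x from funext tan_eq_sin_div_cos]
  fun_prop

@[fun_prop]
lemma Real.measurable_tanh : Measurable tanh := by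
  rw [show tanh = fun x => sinh x / cosh x from funext tanh_eq_sinh_div_cosh]
  fun_prop

lemma Real.tanh_mul_abs_mul_abs (c y : ℝ) : tanh (c * |y|) * |y| = tanh (c * y) * y := by
  rcases abs_choice y with h | h <;> rw [h]
  rw [mul_neg c, tanh_neg, neg_mul_neg]

theorem Function.Odd.integral_eq_zero {G E : Type*} [MeasurableSpace G] [AddGroup G]
    [MeasurableNeg G] [NormedAddCommGroup E] [NormedSpace ℝ E] {μ : Measure G}
    [μ.IsNegInvariant] {f : G → E} (hf : f.Odd) : ∫ x, f x ∂μ = 0 := by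
  have h : ∫ x, f x ∂μ = -∫ x, f x ∂μ := calc
    ∫ x, f x ∂μ = ∫ x, f (-x) ∂μ := (integral_neg_eq_self f μ).symm
    _ = ∫ x, -f x ∂μ := by simp only [hf.eq]
    _ = -∫ x, f x ∂μ := integral_neg f
  rw [eq_neg_iff_add_eq_zero, ← two_smul ℝ, smul_eq_zero] at h
  exact h.resolve_left two_ne_zero

lemma ae_eq_or_eq_of_map_eq_smul_dirac_add_smul_dirac {Ω α : Type*} [MeasurableSpace Ω]
    [MeasurableSpace α] [MeasurableSingletonClass α] {μ : Measure Ω} {U : Ω → α}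
    (hU : AEMeasurable U μ) {a b : ℝ≥0∞} {x y : α}
    (h : μ.map U = a • Measure.dirac x + b • Measure.dirac y) :
    ∀ᵐ ω ∂μ, U ω = x ∨ U ω = y := by
  refine ae_of_ae_map hU (p := fun z => z = x ∨ z = y) ?_
  rw [h, ae_add_measure_iff]
  constructor <;> refine Measure.ae_smul_measure ?_ _ <;> simp

theorem condExp_comap_ae_eq_comp {Ω β E : Type*} [MeasurableSpace Ω] [mβ : MeasurableSpace β]
    [NormedAddCommGroup E] [NormedSpace ℝ E] [CompleteSpace E] {μ : Measure Ω}
    [IsFiniteMeasure μ] {X : Ω → β} (hX : Measurable X) {Y : Ω → E} (hY : Integrable Y μ)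
    {g : β → E} (hg : StronglyMeasurable g) (hgX : Integrable (fun ω => g (X ω)) μ)
    (h : ∀ A, MeasurableSet A → ∫ ω in X ⁻¹' A, g (X ω) ∂μ = ∫ ω in X ⁻¹' A, Y ω ∂μ) :
    μ[Y | mβ.comap X] =ᵐ[μ] fun ω => g (X ω) :=
  (ae_eq_condExp_of_forall_setIntegral_eq hX.comap_le hY (fun _ _ _ => hgX.integrableOn)
    (by rintro _ ⟨A, hA, rfl⟩ _; exact h A hA)
    (hg.comp_measurable (Measurable.of_comap_le le_rfl)).aestronglyMeasurable).symm

theorem ProbabilityTheory.IndepFun.integral_comp_prodMk {Ω α β E : Type*} [MeasurableSpace Ω]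
    [MeasurableSpace α] [MeasurableSpace β] [NormedAddCommGroup E] [NormedSpace ℝ E]
    {μ : Measure Ω} [IsFiniteMeasure μ] {U : Ω → α} {Y : Ω → β} (hind : U ⟂ᵢ[μ] Y)
    (hU : AEMeasurable U μ) (hY : AEMeasurable Y μ) {F : α × β → E}
    (hF : AEStronglyMeasurable F ((μ.map U).prod (μ.map Y)))
    (hint : Integrable (fun ω => F (U ω, Y ω)) μ) :
    ∫ ω, F (U ω, Y ω) ∂μ = ∫ u, ∫ y, F (u, y) ∂(μ.map Y) ∂(μ.map U) := by
  have hmap := hind.map_prod_eq_prod_map_map hU hY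
  rw [← hmap] at hF
  rw [← integral_map (hU.prodMk hY) hF, hmap]
  refine integral_prod F ?_
  rw [← hmap]
  exact (integrable_map_measure hF (hU.prodMk hY)).mpr hint

lemma MeasureTheory.Integrable.tanh_const_mul_mul_self {Ω : Type*} [MeasurableSpace Ω]
    {μ : Measure Ω} {Y : Ω → ℝ} (hY : Integrable Y μ) (c : ℝ) :
    Integrable (fun ω => tanh (c * Y ω) * Y ω) μ :=
  hY.bdd_mul
    (measurable_tanh.comp_aemeasurable (hY.1.aemeasurable.const_mul c)).aestronglyMeasurable
    (ae_of_all _ fun _ => (abs_tanh_lt_one _).le)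

lemma integrable_of_map_eq_gaussianReal {Ω : Type*} [MeasurableSpace Ω] {μ : Measure Ω}
    {Y : Ω → ℝ} (hY : AEMeasurable Y μ) {m : ℝ} {v : ℝ≥0} (hYlaw : μ.map Y = gaussianReal m v) :
    Integrable Y μ :=
  (HasLaw.mk hY hYlaw).hasGaussianLaw.integrable

/- The factor `exp (-m y / v)` hidden in `tanh (m y / v) - 1` cancels the odd part of the Gaussian
exponent, leaving a function even in `y`. -/
lemma gaussianPDFReal_mul_tanh_sub_one (m : ℝ) (v : ℝ≥0) (y : ℝ) :
    gaussianPDFReal m v y * (tanh (m / v * y) - 1)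
      = -(√(2 * π * v))⁻¹ * exp (-(y ^ 2 + m ^ 2) / (2 * v)) / cosh (m / v * y) := by
  rcases eq_or_ne (v : ℝ) 0 with hv | hv
  · simp [gaussianPDFReal, hv]
  have hcosh : cosh (m / v * y) ≠ 0 := (cosh_pos _).ne'
  have htanh : tanh (m / v * y) - 1 = -exp (-(m / v * y)) / cosh (m / v * y) := by
    rw [tanh_eq_sinh_div_cosh, div_sub_one hcosh, ← neg_sub, cosh_sub_sinh, neg_div]
  have hexp : exp (-(y - m) ^ 2 / (2 * v)) * exp (-(m / v * y))
      = exp (-(y ^ 2 + m ^ 2) / (2 * v)) := by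
    rw [← exp_add]
    congr 1
    field_simp
    ring
  rw [gaussianPDFReal, htanh, ← hexp]
  ring

theorem integral_indicator_tanh_mul_sub_self_gaussianReal (m : ℝ) {v : ℝ≥0} (hv : v ≠ 0)
    {s : Set ℝ} (hs : -s = s) :
    ∫ y, s.indicator (fun y => tanh (m / v * y) * y - y) y ∂gaussianReal m v = 0 := by
  rw [integral_gaussianReal_eq_integral_smul hv]
  refine Function.Odd.integral_eq_zero fun y => ?_
  have hmem : -y ∈ s ↔ y ∈ s := by rw [← Set.mem_neg, hs]
  by_cases hy : y ∈ s
  · have hpdf : gaussianPDFReal m v (-y) * (tanh (m / v * -y) - 1)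
        = gaussianPDFReal m v y * (tanh (m / v * y) - 1) := by
      rw [gaussianPDFReal_mul_tanh_sub_one, gaussianPDFReal_mul_tanh_sub_one, neg_sq, mul_neg,
        cosh_neg]
    simp only [indicator_of_mem hy, indicator_of_mem (hmem.2 hy), smul_eq_mul]
    linear_combination (-y) * hpdf
  · simp [indicator_of_notMem hy, indicator_of_notMem (mt hmem.1 hy)]

/- Sets `S` symmetric in the second coordinate generate `σ(U, |Y|)`: this is
`E(Y | U, |Y|) = tanh (m Y / v) Y`. -/
theorem ProbabilityTheory.IndepFun.setIntegral_tanh_mul_self_eq {Ω α : Type*}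
    [MeasurableSpace Ω] [MeasurableSpace α] {μ : Measure Ω} [IsFiniteMeasure μ] {U : Ω → α}
    {Y : Ω → ℝ} (hind : U ⟂ᵢ[μ] Y) (hU : Measurable U) (hY : Measurable Y) {m : ℝ} {v : ℝ≥0}
    (hv : v ≠ 0) (hYlaw : μ.map Y = gaussianReal m v) {S : Set (α × ℝ)} (hS : MeasurableSet S)
    (hsymm : ∀ u y, (u, -y) ∈ S ↔ (u, y) ∈ S) :
    ∫ ω in (fun ω => (U ω, Y ω)) ⁻¹' S, tanh (m / v * Y ω) * Y ω ∂μ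
      = ∫ ω in (fun ω => (U ω, Y ω)) ⁻¹' S, Y ω ∂μ := by
  set k : ℝ → ℝ := fun y => tanh (m / v * y) * y - y
  have hYint := integrable_of_map_eq_gaussianReal hY.aemeasurable hYlaw
  have hT : MeasurableSet ((fun ω => (U ω, Y ω)) ⁻¹' S) := (hU.prodMk hY) hS
  have hinner : ∀ u, ∫ y, S.indicator (fun p => k p.2) (u, y) ∂gaussianReal m v = 0 := by
    intro u
    refine (integral_congr_ae (ae_of_all _ fun y => ?_)).trans
      (integral_indicator_tanh_mul_sub_self_gaussianReal m hv (s := Prod.mk u ⁻¹' S) ?_)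
    · exact (Set.indicator_comp_right (Prod.mk u) (g := fun p => k p.2)).symm
    · ext y
      simp [hsymm]
  rw [← sub_eq_zero, ← integral_sub (hYint.tanh_const_mul_mul_self _).integrableOn
    hYint.integrableOn, ← integral_indicator hT]
  have hF : ((fun ω => (U ω, Y ω)) ⁻¹' S).indicator (fun ω => k (Y ω))
      = fun ω => S.indicator (fun p => k p.2) (U ω, Y ω) :=
    funext fun _ => Set.indicator_comp_right (fun ω => (U ω, Y ω)) (g := fun p => k p.2)
  change ∫ ω, ((fun ω => (U ω, Y ω)) ⁻¹' S).indicator (fun ω => k (Y ω)) ω ∂μ = 0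
  rw [hF, hind.integral_comp_prodMk hU.aemeasurable hY.aemeasurable, hYlaw]
  · simp only [hinner, integral_zero]
  · exact (Measurable.indicator (by fun_prop) hS).aestronglyMeasurable
  · rw [← hF]
    exact ((hYint.tanh_const_mul_mul_self _).sub hYint).indicator hT

/-- With `Y ~ N(m, σ²)`, `U ~ Bernoulli(1/2)` independent of `Y`, and
`X = arctan(Y²) + Uπ`: `E(Y|X) = tanh((m/σ²)√(tan X))·√(tan X)` a.s. -/
theorem condexp_eq_tanh_sqrt_tan {Ω : Type*} [MeasurableSpace Ω] (μ : Measure Ω)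
    [IsProbabilityMeasure μ] (Y U : Ω → ℝ) (m σ : ℝ) (hσ : 0 < σ)
    (hYm : Measurable Y) (hUm : Measurable U)
    (hY : μ.map Y = gaussianReal m ⟨σ ^ 2, sq_nonneg σ⟩)
    (hU : μ.map U = (1/2 : ℝ≥0∞) • Measure.dirac (0 : ℝ) + (1/2 : ℝ≥0∞) • Measure.dirac 1)
    (hindep : IndepFun U Y μ)
    (X : Ω → ℝ) (hX : X = fun ω => Real.arctan ((Y ω) ^ 2) + U ω * Real.pi) :
    μ[Y | MeasurableSpace.comap X inferInstance]
      =ᵐ[μ] fun ω =>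
        Real.tanh ((m / σ ^ 2) * Real.sqrt (Real.tan (X ω))) * Real.sqrt (Real.tan (X ω)) := by
  subst hX
  have hv : (⟨σ ^ 2, sq_nonneg σ⟩ : ℝ≥0) ≠ 0 := by
    simpa [← NNReal.coe_ne_zero] using hσ.ne'
  have hYint := integrable_of_map_eq_gaussianReal hYm.aemeasurable hY
  have hsqrt_tan : ∀ᵐ ω ∂μ, tanh (m / σ ^ 2 * √(tan (arctan (Y ω ^ 2) + U ω * π)))
      * √(tan (arctan (Y ω ^ 2) + U ω * π)) = tanh (m / σ ^ 2 * Y ω) * Y ω := by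
    filter_upwards [ae_eq_or_eq_of_map_eq_smul_dirac_add_smul_dirac hUm.aemeasurable hU]
      with ω hω
    have htan : tan (arctan (Y ω ^ 2) + U ω * π) = Y ω ^ 2 := by
      rcases hω with h | h <;> simp [h, tan_arctan, tan_add_pi]
    rw [htan, sqrt_sq_eq_abs, tanh_mul_abs_mul_abs]
  refine condExp_comap_ae_eq_comp (g := fun x => tanh (m / σ ^ 2 * √(tan x)) * √(tan x))
    (by fun_prop) hYint (by fun_prop : Measurable _).stronglyMeasurable
    ((hYint.tanh_const_mul_mul_self _).congr (hsqrt_tan.mono fun _ => Eq.symm)) fun A hA => ?_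
  rw [setIntegral_congr_ae (measurableSet_preimage (by fun_prop) hA)
    (hsqrt_tan.mono fun _ h _ => h)]
  exact hindep.setIntegral_tanh_mul_self_eq hUm hYm hv hY
    (measurableSet_preimage (f := fun p : ℝ × ℝ => arctan (p.2 ^ 2) + p.1 * π) (by fun_prop) hA)
    fun u y => by simp only [Set.mem_preimage, neg_sq]
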